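/- arXiv:0801.1319 — 3 statements merged into one kernel-verified Lean document; each statement's English description precedes it below -/
import Mathlib

section
/- Let w ∈ W_{n,q} be a word, and let P be the insertion tableau produced by Hecke insertion of w. Then the length of the first row of P equals LIS(w), the length of the longest strictly increasing subsequence of w. -/
/-- Replace row `i` of `T` by `r`, appending a new row if `i = T.length`. -/
def setRow (T : List (List ℕ)) (i : ℕ) (r : List ℕ) : List (List ℕ) :=
  if i < T.length then T.set i r else T ++ [r]

/-- One pass of Hecke insertion (BKSTY): insert value `x` starting at row `i`,
with `fuel` bounding the number of rows visited. -/
def heckeAux : ℕ → ℕ → List (List ℕ) → ℕ → List (List ℕ)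
  | 0, _, T, _ => T
  | fuel + 1, x, T, i =>
    let R := T.getD i []
    if R.all (· ≤ x) then
      -- terminating step: adjoin `x` at the end of row `i` if this yields an
      -- increasing tableau, otherwise leave the tableau unchanged
      if (x ∉ R) ∧ (i = 0 ∨ (R.length < (T.getD (i - 1) []).length ∧
            (T.getD (i - 1) []).getD R.length 0 < x)) then
        setRow T i (R ++ [x])
      else T
    else
      -- bumping step: `y` is the smallest entry of the row larger than `x`;
      -- replace it by `x` if this yields an increasing tableau; in any case
      -- insert `y` into the next row
      let p := (R.takeWhile (· ≤ x)).length
      let y := R.getD p 0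
      let T' := if (p = 0 ∨ R.getD (p - 1) 0 < x) ∧
            (i = 0 ∨ (T.getD (i - 1) []).getD p 0 < x) then setRow T i (R.set p x) else T
      heckeAux fuel y T' (i + 1)

/-- Hecke insertion of a value `x` into an increasing tableau `T`. -/
def heckeInsert (T : List (List ℕ)) (x : ℕ) : List (List ℕ) :=
  heckeAux (T.length + 1) x T 0

/-- The insertion tableau `P` of a word under the Hecke algorithm. -/
def heckeP (w : List ℕ) : List (List ℕ) := w.foldl heckeInsert []

/-- The shape `Heckeshape w` of the Hecke insertion tableau of `w`. -/
def heckeShape (w : List ℕ) : List ℕ := (heckeP w).map List.length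

/-- Length of the longest strictly increasing subsequence of a word. -/
noncomputable def LIS (w : List ℕ) : ℕ :=
  sSup {k | ∃ s : List ℕ, s.Sublist w ∧ s.Chain' (· < ·) ∧ s.length = k}

/-- Length of the longest strictly decreasing subsequence of a word. -/
noncomputable def LDS (w : List ℕ) : ℕ :=
  sSup {k | ∃ s : List ℕ, s.Sublist w ∧ s.Chain' (· > ·) ∧ s.length = k}

/-!
The first row of a Hecke insertion tableau is never affected by the lower rows, so it evolves
by a patience-sorting step on a strictly increasing row: inserting `x` changes nothing if `x` is
already present, and otherwise `x` replaces the smallest entry larger than it, or is appended.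
For a threshold `a`, let `c a` be the number of entries `< a` of the row and `ℓ a` the LIS of the
subword of letters `< a`. Appending a letter `x` leaves both unchanged when `a ≤ x` and replaces
them by `max (c a) (c x + 1)`, resp. `max (ℓ a) (ℓ x + 1)`, when `x < a`. Hence `c = ℓ`, and a
threshold above every letter gives the theorem.
-/

lemma le_LIS {s w : List ℕ} (hs : s.Sublist w) (hc : s.IsChain (· < ·)) : s.length ≤ LIS w :=
  le_csSup ⟨w.length, fun _ ⟨_, hsub, _, hk⟩ => hk ▸ hsub.length_le⟩ ⟨s, hs, hc, rfl⟩

lemma exists_LIS (w : List ℕ) : ∃ s : List ℕ, s.Sublist w ∧ s.IsChain (· < ·) ∧ s.length = LIS w :=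
  Nat.sSup_mem (s := {k | ∃ s : List ℕ, s.Sublist w ∧ s.IsChain (· < ·) ∧ s.length = k})
    ⟨0, [], List.nil_sublist w, List.IsChain.nil, rfl⟩
    ⟨w.length, fun _ ⟨_, hsub, _, hk⟩ => hk ▸ hsub.length_le⟩

lemma LIS_nil : LIS [] = 0 := by
  obtain ⟨s, hs, -, hlen⟩ := exists_LIS []
  rw [← hlen, List.sublist_nil.mp hs, List.length_nil]

lemma isChain_lt_append_singleton_iff {s : List ℕ} {x : ℕ} :
    (s ++ [x]).IsChain (· < ·) ↔ s.IsChain (· < ·) ∧ ∀ r ∈ s, r < x := by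
  simp [List.isChain_iff_pairwise, List.pairwise_append]

lemma LIS_append_singleton (w : List ℕ) (x : ℕ) :
    LIS (w ++ [x]) = max (LIS w) (LIS (w.filter (· < x)) + 1) := by
  apply le_antisymm
  · obtain ⟨s, hsub, hc, hlen⟩ := exists_LIS (w ++ [x])
    obtain ⟨s', t, rfl, hs', ht⟩ := List.sublist_append_iff.mp hsub
    rw [← hlen]
    rcases List.sublist_singleton.mp ht with rfl | rfl
    · rw [List.append_nil] at hc ⊢
      exact le_max_of_le_left (le_LIS hs' hc)
    · obtain ⟨hc', hlt⟩ := isChain_lt_append_singleton_iff.mp hc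
      have hs'x : s'.Sublist (w.filter (· < x)) := by
        have hfix : s'.filter (· < x) = s' := List.filter_eq_self.mpr (by simpa using hlt)
        simpa only [hfix] using hs'.filter (· < x)
      simpa using le_max_of_le_right (Nat.add_le_add_right (le_LIS hs'x hc') 1)
  · obtain ⟨s, hsub, hc, hlen⟩ := exists_LIS (w.filter (· < x))
    obtain ⟨s', hsub', hc', hlen'⟩ := exists_LIS w
    refine max_le ?_ ?_
    · exact hlen' ▸ le_LIS (hsub'.trans (List.sublist_append_left w [x])) hc'
    · have hlt : ∀ r ∈ s, r < x := fun r hr => by simpa using List.of_mem_filter (hsub.subset hr)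
      simpa [hlen] using le_LIS ((hsub.trans List.filter_sublist).append (List.Sublist.refl [x]))
        (isChain_lt_append_singleton_iff.mpr ⟨hc, hlt⟩)

-- The step of `heckeAux` in row `0`; its outcome does not depend on the other rows.
def heckeRowInsert (R : List ℕ) (x : ℕ) : List ℕ :=
  if R.all (· ≤ x) then (if x ∈ R then R else R ++ [x])
  else
    if (R.takeWhile (· ≤ x)).length = 0 ∨ R.getD ((R.takeWhile (· ≤ x)).length - 1) 0 < x
    then R.set (R.takeWhile (· ≤ x)).length x else R

section RowInsert

variable {R : List ℕ} {x a : ℕ}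

lemma lt_of_mem_dropWhile (hR : R.Pairwise (· < ·)) {r : ℕ} (hr : r ∈ R.dropWhile (· ≤ x)) :
    x < r := by
  obtain ⟨m, t, hmt⟩ := List.exists_cons_of_ne_nil (List.ne_nil_of_mem hr)
  have hm : x < m := by
    simpa [hmt] using List.head_dropWhile_not (· ≤ x) (l := R) (by simp [hmt])
  have hmts : (m :: t).Pairwise (· < ·) := hmt ▸ hR.sublist (List.dropWhile_suffix _).sublist
  rw [hmt, List.mem_cons] at hr
  rcases hr with rfl | hr
  · exact hm
  · exact hm.trans (List.rel_of_pairwise_cons hmts hr)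

lemma lt_of_mem_takeWhile_of_not_mem (hx : x ∉ R) {r : ℕ} (hr : r ∈ R.takeWhile (· ≤ x)) :
    r < x :=
  lt_of_le_of_ne (by simpa using List.mem_takeWhile_imp hr)
    fun h => hx (h ▸ (List.takeWhile_prefix _).subset hr)

lemma getD_length_takeWhile_sub_one {p : ℕ → Bool} (h : R.takeWhile p ≠ []) :
    R.getD ((R.takeWhile p).length - 1) 0 = (R.takeWhile p).getLast h := by
  have hlen := List.length_pos_of_ne_nil h
  nth_rw 1 [← List.takeWhile_append_dropWhile (p := p) (l := R)]
  rw [List.getD_append _ _ _ _ (by omega), List.getD_eq_getElem _ _ (by omega),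
    List.getLast_eq_getElem]

lemma heckeRowInsert_of_mem (hR : R.Pairwise (· < ·)) (hx : x ∈ R) : heckeRowInsert R x = R := by
  unfold heckeRowInsert
  split_ifs with hall hcond
  · rfl
  · exfalso
    have hxL : x ∈ R.takeWhile (· ≤ x) := by
      rw [← List.takeWhile_append_dropWhile (p := (· ≤ x)) (l := R), List.mem_append] at hx
      exact hx.resolve_right fun h => (lt_of_mem_dropWhile hR h).false
    have hLs : (R.takeWhile (· ≤ x)).Pairwise (· ≤ ·) :=
      (hR.sublist (List.takeWhile_prefix _).sublist).imp le_of_lt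
    rw [getD_length_takeWhile_sub_one (List.ne_nil_of_mem hxL)] at hcond
    rcases hcond with h0 | hlt
    · exact List.ne_nil_of_mem hxL (List.eq_nil_of_length_eq_zero h0)
    · exact (hLs.rel_getLast hxL).not_gt hlt
  · rfl

lemma heckeRowInsert_of_not_mem (hx : x ∉ R) :
    heckeRowInsert R x = R.takeWhile (· ≤ x) ++ x :: (R.dropWhile (· ≤ x)).tail := by
  unfold heckeRowInsert
  split_ifs with hall hcond
  · have hL : R.takeWhile (· ≤ x) = R := List.takeWhile_eq_self_iff.mpr (List.all_eq_true.mp hall)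
    have hM : R.dropWhile (· ≤ x) = [] := List.dropWhile_eq_nil_iff.mpr (List.all_eq_true.mp hall)
    rw [hL, hM, List.tail_nil]
  · obtain ⟨m, t, hmt⟩ : ∃ m t, R.dropWhile (· ≤ x) = m :: t := by
      refine List.exists_cons_of_ne_nil fun hM => hall ?_
      exact List.all_eq_true.mpr (List.dropWhile_eq_nil_iff.mp hM)
    nth_rw 1 [← List.takeWhile_append_dropWhile (p := (· ≤ x)) (l := R)]
    rw [List.set_append_right _ _ le_rfl, Nat.sub_self, hmt]
    rfl
  · exfalso
    rw [not_or, not_lt] at hcond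
    obtain ⟨hp, hle⟩ := hcond
    have hL : R.takeWhile (· ≤ x) ≠ [] := fun h => hp (by simp [h])
    rw [getD_length_takeWhile_sub_one hL] at hle
    have hmem := List.getLast_mem hL
    have hge : (R.takeWhile (· ≤ x)).getLast hL ≤ x := by simpa using List.mem_takeWhile_imp hmem
    exact hx (le_antisymm hge hle ▸ (List.takeWhile_prefix _).subset hmem)

lemma mem_of_mem_heckeRowInsert {r : ℕ} (hr : r ∈ heckeRowInsert R x) : r ∈ R ∨ r = x := by
  unfold heckeRowInsert at hr
  split_ifs at hr
  · exact Or.inl hr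
  · simpa using hr
  · exact List.mem_or_eq_of_mem_set hr
  · exact Or.inl hr

lemma pairwise_heckeRowInsert (hR : R.Pairwise (· < ·)) : (heckeRowInsert R x).Pairwise (· < ·) := by
  by_cases hx : x ∈ R
  · rwa [heckeRowInsert_of_mem hR hx]
  rw [heckeRowInsert_of_not_mem hx]
  have hL : ∀ r ∈ R.takeWhile (· ≤ x), r < x := fun _ => lt_of_mem_takeWhile_of_not_mem hx
  have hMs := hR.sublist (List.dropWhile_suffix (l := R) (· ≤ x)).sublist
  have hM : ∀ r ∈ (R.dropWhile (· ≤ x)).tail, x < r := fun r hr =>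
    lt_of_mem_dropWhile hR (List.mem_of_mem_tail hr)
  refine List.pairwise_append.mpr ⟨hR.sublist (List.takeWhile_prefix _).sublist,
    List.pairwise_cons.mpr ⟨hM, hMs.tail⟩, fun r hr s hs => ?_⟩
  rcases List.mem_cons.mp hs with rfl | hs
  · exact hL r hr
  · exact (hL r hr).trans (hM s hs)

lemma countP_tail_add_one {M : List ℕ} (hM : M.Pairwise (· < ·)) (a : ℕ) :
    M.tail.countP (· < a) + 1 = max (M.countP (· < a)) 1 := by
  cases M with
  | nil => simp
  | cons m t =>
    by_cases hma : m < a
    · simp [hma]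
    · have ht : t.countP (· < a) = 0 := List.countP_eq_zero.mpr fun r hr => by
        have := List.rel_of_pairwise_cons hM hr
        simp only [decide_eq_true_eq, not_lt]
        omega
      simp [hma, ht]

lemma countP_lt_add_one_le (hx : x ∈ R) (hxa : x < a) :
    R.countP (· < x) + 1 ≤ R.countP (· < a) := by
  induction R with
  | nil => simp at hx
  | cons r R ih =>
    have hmono : R.countP (· < x) ≤ R.countP (· < a) :=
      List.countP_mono_left fun s _ hs => by simp only [decide_eq_true_eq] at hs ⊢; omega
    simp only [List.countP_cons]
    rcases List.mem_cons.mp hx with rfl | hx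
    · simp [hxa]
      omega
    · have := ih hx
      by_cases hrx : r < x <;> by_cases hra : r < a <;> simp [hrx, hra] <;> omega

lemma countP_append_cons_tail {L M : List ℕ} (hL : ∀ r ∈ L, r < x) (hM : ∀ r ∈ M, x < r)
    (hMs : M.Pairwise (· < ·)) :
    (L ++ x :: M.tail).countP (· < a) =
      if x < a then max ((L ++ M).countP (· < a)) ((L ++ M).countP (· < x) + 1)
      else (L ++ M).countP (· < a) := by
  have hLx : L.countP (· < x) = L.length := List.countP_eq_length.mpr (by simpa using hL)
  have hMx : M.countP (· < x) = 0 :=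
    List.countP_eq_zero.mpr fun r hr => by simpa using (hM r hr).le
  have htail := countP_tail_add_one hMs a
  by_cases hxa : x < a
  · simp only [List.countP_append, List.countP_cons, hxa, decide_true, if_true]
    have hLa : L.countP (· < a) = L.length :=
      List.countP_eq_length.mpr fun r hr => by simpa using (hL r hr).trans hxa
    omega
  · simp only [List.countP_append, List.countP_cons, hxa, decide_false, Bool.false_eq_true,
      if_false]
    have hMa : M.countP (· < a) = 0 :=
      List.countP_eq_zero.mpr fun r hr => by simp only [decide_eq_true_eq]; have := hM r hr; omega
    omega

lemma countP_heckeRowInsert (hR : R.Pairwise (· < ·)) :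
    (heckeRowInsert R x).countP (· < a) =
      if x < a then max (R.countP (· < a)) (R.countP (· < x) + 1) else R.countP (· < a) := by
  by_cases hx : x ∈ R
  · rw [heckeRowInsert_of_mem hR hx]
    split_ifs with hxa
    · exact (max_eq_left (countP_lt_add_one_le hx hxa)).symm
    · rfl
  rw [heckeRowInsert_of_not_mem hx]
  have hL : ∀ r ∈ R.takeWhile (· ≤ x), r < x := fun _ => lt_of_mem_takeWhile_of_not_mem hx
  have := countP_append_cons_tail (a := a) hL (fun r => lt_of_mem_dropWhile hR)
    (hR.sublist (List.dropWhile_suffix _).sublist)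
  rwa [List.takeWhile_append_dropWhile] at this

end RowInsert

def heckeFirstRow (w : List ℕ) : List ℕ := w.foldl heckeRowInsert []

lemma heckeFirstRow_append_singleton (w : List ℕ) (x : ℕ) :
    heckeFirstRow (w ++ [x]) = heckeRowInsert (heckeFirstRow w) x := by
  simp [heckeFirstRow, List.foldl_append]

lemma pairwise_heckeFirstRow (w : List ℕ) : (heckeFirstRow w).Pairwise (· < ·) := by
  induction w using List.reverseRecOn with
  | nil => exact List.Pairwise.nil
  | append_singleton w x ih =>
    rw [heckeFirstRow_append_singleton]
    exact pairwise_heckeRowInsert ih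

lemma mem_of_mem_heckeFirstRow {w : List ℕ} {r : ℕ} (hr : r ∈ heckeFirstRow w) : r ∈ w := by
  induction w using List.reverseRecOn with
  | nil => simp [heckeFirstRow] at hr
  | append_singleton w x ih =>
    rw [heckeFirstRow_append_singleton] at hr
    rcases mem_of_mem_heckeRowInsert hr with hr | rfl
    · exact List.mem_append_left _ (ih hr)
    · exact List.mem_append_right _ (List.mem_singleton_self r)

lemma countP_heckeFirstRow (w : List ℕ) (a : ℕ) :
    (heckeFirstRow w).countP (· < a) = LIS (w.filter (· < a)) := by
  induction w using List.reverseRecOn generalizing a with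
  | nil => simp [heckeFirstRow, LIS_nil]
  | append_singleton w x ih =>
    rw [heckeFirstRow_append_singleton, countP_heckeRowInsert (pairwise_heckeFirstRow w),
      List.filter_append]
    by_cases hxa : x < a
    · have hfilter : (w.filter (· < a)).filter (· < x) = w.filter (· < x) := by
        rw [List.filter_filter]
        congr 1
        funext r
        by_cases hrx : r < x
        · simp [hrx, hrx.trans hxa]
        · simp [hrx]
      simp [hxa, LIS_append_singleton, hfilter, ih]
    · simp [hxa, ih]

lemma length_heckeFirstRow (w : List ℕ) : (heckeFirstRow w).length = LIS w := by
  have hbound : ∀ r ∈ w, r < w.sum + 1 := fun r hr => Nat.lt_succ_of_le (List.le_sum_of_mem hr)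
  have h := countP_heckeFirstRow w (w.sum + 1)
  rwa [List.countP_eq_length.mpr fun r hr => by simpa using hbound r (mem_of_mem_heckeFirstRow hr),
    List.filter_eq_self.mpr (by simpa using hbound)] at h

lemma getD_zero_setRow_of_pos {T : List (List ℕ)} (hT : T ≠ []) {i : ℕ} (hi : 0 < i)
    (r : List ℕ) : (setRow T i r).getD 0 [] = T.getD 0 [] := by
  obtain ⟨j, rfl⟩ := Nat.exists_eq_add_of_lt hi
  obtain ⟨R, T, rfl⟩ := List.exists_cons_of_ne_nil hT
  unfold setRow
  split <;> simp

lemma getD_zero_setRow_zero (T : List (List ℕ)) (r : List ℕ) : (setRow T 0 r).getD 0 [] = r := by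
  cases T <;> simp [setRow]

lemma getD_zero_heckeAux_of_pos (fuel x : ℕ) (T : List (List ℕ)) {i : ℕ} (hi : 0 < i) :
    (heckeAux fuel x T i).getD 0 [] = T.getD 0 [] := by
  induction fuel generalizing x T i with
  | zero => rfl
  | succ fuel ih =>
    simp only [heckeAux]
    split_ifs with hall hadj
    · refine getD_zero_setRow_of_pos (fun hT => ?_) hi _
      simp [hT] at hadj
      omega
    · rfl
    · rw [ih _ _ i.succ_pos]
      refine getD_zero_setRow_of_pos (fun hT => ?_) hi _
      simp [hT] at hall
    · exact ih _ _ i.succ_pos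

lemma getD_zero_heckeInsert (T : List (List ℕ)) (x : ℕ) :
    (heckeInsert T x).getD 0 [] = heckeRowInsert (T.getD 0 []) x := by
  simp only [heckeInsert, heckeAux, heckeRowInsert, true_or, and_true]
  split_ifs
  · rfl
  · exact getD_zero_setRow_zero _ _
  · exact (getD_zero_heckeAux_of_pos _ _ _ Nat.one_pos).trans (getD_zero_setRow_zero _ _)
  · exact getD_zero_heckeAux_of_pos _ _ _ Nat.one_pos

lemma getD_zero_heckeP (w : List ℕ) : (heckeP w).getD 0 [] = heckeFirstRow w := by
  induction w using List.reverseRecOn with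
  | nil => rfl
  | append_singleton w x ih =>
    rw [heckeP, List.foldl_append, List.foldl_cons, List.foldl_nil, getD_zero_heckeInsert,
      ← heckeP, ih, heckeFirstRow_append_singleton]

theorem firstRow_length_eq_LIS_general (w : List ℕ) :
    ((heckeP w).getD 0 []).length = LIS w := by
  rw [getD_zero_heckeP, length_heckeFirstRow]

/-- The length of the first row of the Hecke insertion tableau of a word
`w ∈ W_{n,q}` equals `LIS w`. -/
theorem firstRow_length_eq_LIS (n q : ℕ) (w : List ℕ) (hlen : w.length = n)
    (hent : ∀ x ∈ w, 1 ≤ x ∧ x ≤ q) :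
    ((heckeP w).getD 0 []).length = LIS w :=
  firstRow_length_eq_LIS_general w
end

section
/- Let n, q → ∞ with q = Θ(n^α) for some 0 < α < 1/3. Then a random word w chosen uniformly from W_{n,q} satisfies W(w) = w_0 asymptotically almost surely; consequently, under the Plancherel-Hecke measure μ_{n,q}, a random shape λ equals the full staircase (q, q−1, ..., 1) asymptotically almost surely. -/
/-- The simple reflection `s_i = (i, i+1)` in `S_{q+1}`, for a letter `1 ≤ i ≤ q`. -/
def sRef (q i : ℕ) : Equiv.Perm (Fin (q + 1)) :=
  if h : 1 ≤ i ∧ i ≤ q then Equiv.swap ⟨i - 1, by omega⟩ ⟨i, by omega⟩ else 1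

/-- The Coxeter length of a permutation of `{1, …, q+1}`: its number of inversions. -/
def lenPerm (q : ℕ) (π : Equiv.Perm (Fin (q + 1))) : ℕ :=
  (Finset.univ.filter
    (fun p : Fin (q + 1) × Fin (q + 1) => p.1 < p.2 ∧ π p.2 < π p.1)).card

/-- One step of the 0-Hecke (Demazure) product: multiply by `s_i` only if the
Coxeter length increases. -/
def demStep (q : ℕ) (π : Equiv.Perm (Fin (q + 1))) (i : ℕ) : Equiv.Perm (Fin (q + 1)) :=
  if lenPerm q π < lenPerm q (π * sRef q i) then π * sRef q i else π

/-- The permutation `W(w) ∈ S_{q+1}` determined by a word `w` over `{1,…,q}`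
via the 0-Hecke monoid (Demazure product of the letters of `w`). -/
def heckeW (q : ℕ) (w : List ℕ) : Equiv.Perm (Fin (q + 1)) := w.foldl (demStep q) 1

open Filter

/-- The word over `{1,…,q}` determined by a function `Fin n → Fin q`. -/
def toWord {n q : ℕ} (w : Fin n → Fin q) : List ℕ := List.ofFn fun i => (w i : ℕ) + 1

/-- The staircase shape `(q, q−1, …, 2, 1)`. -/
def staircase (q : ℕ) : List ℕ := (List.range q).map (fun i => q - i)

/-!
Cut a word of length `n` into `(q + 1) ^ 2` consecutive blocks of length `⌊n / (q + 1) ^ 2⌋` and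
call a block complete if it contains every letter. Every `π ≠ w₀` has an ascent `s_i`, so a
complete block strictly increases the length of the Demazure product unless it is already `w₀`;
`ℓ(w₀)` complete blocks therefore force `W(w) = w₀`. On the insertion side, a letter `x` passes
through `k` full staircase rows `r + 1, …, q` unchanged and arrives in row `k` as `x + k`. Hence
if row `k` starts with `k + 1, …, k + t`, the letter `t + 1` of the next complete block extends
this run by one cell, and `q (q + 1)` complete blocks fill the whole staircase. Finally, by a union
bound some block misses some letter with probability at most
`(q + 1)² q (1 - 1/q)^⌊n/(q+1)²⌋ ≤ 4e q³ exp(-n / 4q³)`, which tends to `0` when `q = O(n^α)`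
with `α < 1/3`.
-/

open Finset Topology

section CoxeterLength

variable {q : ℕ}

lemma eq_revPerm_of_strictAnti {n : ℕ} {π : Equiv.Perm (Fin n)} (h : StrictAnti π) :
    π = Fin.revPerm := by
  have hid : Fin.rev ∘ π = id := (Fin.rev_strictAnti.comp h).eq_id
  refine Equiv.ext fun x => ?_
  simpa using congrArg Fin.rev (congrFun hid x)

lemma lenPerm_revPerm :
    lenPerm q Fin.revPerm = #(univ.filter fun p : Fin (q + 1) × Fin (q + 1) => p.1 < p.2) := by
  simp [lenPerm]

lemma inversions_subset (π : Equiv.Perm (Fin (q + 1))) :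
    (univ.filter fun p : Fin (q + 1) × Fin (q + 1) => p.1 < p.2 ∧ π p.2 < π p.1) ⊆
      univ.filter fun p => p.1 < p.2 := fun _ hp => by
  simp only [mem_filter] at hp ⊢
  exact ⟨hp.1, hp.2.1⟩

lemma eq_revPerm_of_lenPerm_revPerm_le {π : Equiv.Perm (Fin (q + 1))}
    (h : lenPerm q Fin.revPerm ≤ lenPerm q π) : π = Fin.revPerm := by
  rw [lenPerm_revPerm] at h
  have hall := eq_of_subset_of_card_le (inversions_subset π) h
  refine eq_revPerm_of_strictAnti fun x y hxy => ?_
  have hmem : (x, y) ∈ univ.filter fun p : Fin (q + 1) × Fin (q + 1) => p.1 < p.2 := by simpa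
  rw [← hall] at hmem
  exact (mem_filter.mp hmem).2.2

lemma swap_lt_swap_of_lt {m : ℕ} {a b x y : Fin m} (hab : (a : ℕ) + 1 = b) (hxy : x < y)
    (hne : (x, y) ≠ (a, b)) : Equiv.swap a b x < Equiv.swap a b y := by
  simp only [ne_eq, Prod.mk.injEq] at hne
  rw [Equiv.swap_apply_def, Equiv.swap_apply_def]
  split_ifs <;> simp only [Fin.ext_iff, Fin.lt_def] at * <;> omega

lemma lenPerm_lt_lenPerm_mul_swap {π : Equiv.Perm (Fin (q + 1))} {a b : Fin (q + 1)}
    (hab : (a : ℕ) + 1 = b) (hπ : π a < π b) :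
    lenPerm q π < lenPerm q (π * Equiv.swap a b) := by
  set σ := Equiv.swap a b
  have hlt : a < b := Fin.lt_def.mpr (by omega)
  let f : Fin (q + 1) × Fin (q + 1) → Fin (q + 1) × Fin (q + 1) := fun p => (σ p.1, σ p.2)
  have hf : Function.Injective f := Function.Involutive.injective fun p => by simp [f, σ]
  have hsub : (univ.filter fun p : Fin (q + 1) × Fin (q + 1) => p.1 < p.2 ∧ π p.2 < π p.1).image
      f ⊂ univ.filter fun p => p.1 < p.2 ∧ (π * σ) p.2 < (π * σ) p.1 := by
    refine (ssubset_iff_of_subset fun p hp => ?_).mpr ⟨(a, b), ?_, ?_⟩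
    · obtain ⟨r, hr, rfl⟩ := mem_image.mp hp
      simp only [mem_filter, mem_univ, true_and] at hr ⊢
      have hne : (r.1, r.2) ≠ (a, b) := fun h => by
        simp only [Prod.mk.injEq] at h
        exact absurd hπ (h.1 ▸ h.2 ▸ hr.2).not_gt
      exact ⟨swap_lt_swap_of_lt hab hr.1 hne, by simpa [f, σ] using hr.2⟩
    · exact mem_filter.mpr ⟨mem_univ _, hlt, by simpa [σ] using hπ⟩
    · simp only [mem_image, mem_filter, mem_univ, true_and, not_exists, not_and]
      intro r hr hfr
      have h1 : r = (b, a) := hf (by rw [hfr]; simp [f, σ])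
      exact absurd hr.1 (h1 ▸ hlt.not_gt)
  simpa [lenPerm, card_image_of_injective _ hf] using card_lt_card hsub

lemma exists_lenPerm_lt_lenPerm_mul_sRef {π : Equiv.Perm (Fin (q + 1))} (h : π ≠ Fin.revPerm) :
    ∃ i ∈ List.range' 1 q, lenPerm q π < lenPerm q (π * sRef q i) := by
  obtain ⟨k, hk⟩ : ∃ k : Fin q, ¬ π k.succ < π k.castSucc := by
    by_contra! hanti
    exact h (eq_revPerm_of_strictAnti (Fin.strictAnti_iff_succ_lt.mpr hanti))
  have hasc : π k.castSucc < π k.succ :=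
    lt_of_le_of_ne (not_lt.mp hk) (π.injective.ne Fin.castSucc_lt_succ.ne)
  refine ⟨k + 1, List.mem_range'_1.mpr ⟨by omega, by omega⟩, ?_⟩
  have hs : sRef q (k + 1) = Equiv.swap k.castSucc k.succ := by
    simp [sRef, Fin.castSucc, Fin.succ, Fin.castAdd, Fin.castLE]
  exact hs ▸ lenPerm_lt_lenPerm_mul_swap rfl hasc

lemma lenPerm_le_lenPerm_demStep (π : Equiv.Perm (Fin (q + 1))) (i : ℕ) :
    lenPerm q π ≤ lenPerm q (demStep q π i) := by
  unfold demStep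
  split_ifs with h
  exacts [h.le, le_rfl]

lemma lenPerm_le_lenPerm_foldl_demStep (w : List ℕ) (π : Equiv.Perm (Fin (q + 1))) :
    lenPerm q π ≤ lenPerm q (w.foldl (demStep q) π) := by
  induction w generalizing π with
  | nil => exact le_rfl
  | cons i w ih => exact (lenPerm_le_lenPerm_demStep π i).trans (ih _)

lemma demStep_eq_self_of_lenPerm_le {π : Equiv.Perm (Fin (q + 1))} {i : ℕ}
    (h : lenPerm q (demStep q π i) ≤ lenPerm q π) : demStep q π i = π := by
  unfold demStep at h ⊢
  split_ifs at h ⊢ with hlt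
  exacts [absurd h (not_le.mpr hlt), rfl]

lemma demStep_eq_self_of_mem {w : List ℕ} {π : Equiv.Perm (Fin (q + 1))}
    (h : lenPerm q (w.foldl (demStep q) π) ≤ lenPerm q π) {i : ℕ} (hi : i ∈ w) :
    demStep q π i = π := by
  induction w with
  | nil => simp at hi
  | cons a w ih =>
    rw [List.foldl_cons] at h
    have ha : demStep q π a = π := demStep_eq_self_of_lenPerm_le
      ((lenPerm_le_lenPerm_foldl_demStep w _).trans h)
    rcases List.mem_cons.mp hi with rfl | hi
    · exact ha
    · rw [ha] at h
      exact ih h hi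

lemma lenPerm_lt_lenPerm_foldl_demStep {w : List ℕ} (hw : List.range' 1 q ⊆ w)
    {π : Equiv.Perm (Fin (q + 1))} (h : π ≠ Fin.revPerm) :
    lenPerm q π < lenPerm q (w.foldl (demStep q) π) := by
  obtain ⟨i, hi, hlt⟩ := exists_lenPerm_lt_lenPerm_mul_sRef h
  by_contra! hle
  have hfix := demStep_eq_self_of_mem hle (hw hi)
  rw [demStep, if_pos hlt] at hfix
  exact hlt.ne (congrArg (lenPerm q) hfix).symm

lemma min_le_lenPerm_foldl_flatten {bs : List (List ℕ)}
    (hbs : ∀ b ∈ bs, List.range' 1 q ⊆ b) (π : Equiv.Perm (Fin (q + 1))) :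
    min (lenPerm q π + bs.length) (lenPerm q Fin.revPerm) ≤
      lenPerm q (bs.flatten.foldl (demStep q) π) := by
  induction bs generalizing π with
  | nil => exact min_le_left _ _
  | cons b bs ih =>
    by_cases hπ : π = Fin.revPerm
    · subst hπ
      exact (min_le_right _ _).trans (lenPerm_le_lenPerm_foldl_demStep _ _)
    · rw [List.flatten_cons, List.foldl_append]
      have hb := lenPerm_lt_lenPerm_foldl_demStep (hbs b (by simp)) hπ
      have := ih (fun c hc => hbs c (by simp [hc])) (b.foldl (demStep q) π)
      simp only [List.length_cons] at this ⊢
      omega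

lemma heckeW_flatten_append_eq_revPerm {bs : List (List ℕ)}
    (hbs : ∀ b ∈ bs, List.range' 1 q ⊆ b) (hlen : lenPerm q Fin.revPerm ≤ bs.length)
    (rest : List ℕ) : heckeW q (bs.flatten ++ rest) = Fin.revPerm := by
  refine eq_revPerm_of_lenPerm_revPerm_le ?_
  rw [heckeW, List.foldl_append]
  have hmin := min_le_lenPerm_foldl_flatten hbs 1
  have hflat : lenPerm q Fin.revPerm ≤ lenPerm q (bs.flatten.foldl (demStep q) 1) := by
    omega
  exact hflat.trans (lenPerm_le_lenPerm_foldl_demStep rest _)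

end CoxeterLength

section HeckeInsertion

variable {q : ℕ}

lemma lt_length_of_mem_getD {T : List (List ℕ)} {i a : ℕ} (h : a ∈ T.getD i []) :
    i < T.length := by
  by_contra! hle
  rw [List.getD_eq_default _ _ hle] at h
  simp at h

lemma getD_setRow_self {T : List (List ℕ)} {i : ℕ} (r : List ℕ) (hi : i ≤ T.length) :
    (setRow T i r).getD i [] = r := by
  unfold setRow
  split_ifs with h
  · simp [h]
  · simp [show i = T.length by omega]

lemma getD_setRow_of_ne {T : List (List ℕ)} {i j : ℕ} (r : List ℕ) (hi : i ≤ T.length)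
    (hji : j ≠ i) : (setRow T i r).getD j [] = T.getD j [] := by
  unfold setRow
  split_ifs with h
  · simp [List.getD_eq_getElem?_getD, List.getElem?_set_ne hji.symm]
  · rcases lt_or_ge j T.length with hj | hj
    · simp [List.getD_eq_getElem?_getD, List.getElem?_append_left hj]
    · rw [List.getD_eq_default _ _ hj, List.getD_eq_default]
      simp only [List.length_append, List.length_singleton]
      omega

lemma length_setRow {T : List (List ℕ)} {i : ℕ} (r : List ℕ) (hi : i ≤ T.length) :
    (setRow T i r).length = max T.length (i + 1) := by
  unfold setRow
  split_ifs with h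
  · rw [List.length_set]
    omega
  · rw [List.length_append, List.length_singleton]
    omega

lemma length_takeWhile_eq_findIdx {α : Type*} (P : α → Bool) (l : List α) :
    (l.takeWhile P).length = l.findIdx (fun a => !P a) := by
  rw [List.takeWhile_eq_take_findIdx_not, List.length_take, min_eq_left List.findIdx_le_length]

lemma length_takeWhile_lt_of_not_all {α : Type*} {P : α → Bool} {l : List α}
    (h : ¬ l.all P) : (l.takeWhile P).length < l.length := by
  rw [length_takeWhile_eq_findIdx, List.findIdx_lt_length]
  simpa using h

lemma not_getElem_length_takeWhile {α : Type*} {P : α → Bool} {l : List α}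
    (h : (l.takeWhile P).length < l.length) : P l[(l.takeWhile P).length] = false := by
  simp only [length_takeWhile_eq_findIdx] at h ⊢
  simpa using List.findIdx_getElem (w := h)

/-- What row `i`, currently `R` and lying below the row `above`, becomes when the Hecke insertion
of `x` reaches it. -/
def insertRow (above R : List ℕ) (i x : ℕ) : List ℕ :=
  if R.all (· ≤ x) then
    if x ∉ R ∧ (i = 0 ∨ (R.length < above.length ∧ above.getD R.length 0 < x)) then R ++ [x]
    else R
  else
    if ((R.takeWhile (· ≤ x)).length = 0 ∨ R.getD ((R.takeWhile (· ≤ x)).length - 1) 0 < x) ∧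
        (i = 0 ∨ above.getD (R.takeWhile (· ≤ x)).length 0 < x) then
      R.set (R.takeWhile (· ≤ x)).length x
    else R

lemma exists_heckeAux_succ (f x i : ℕ) {T : List (List ℕ)} (hi : i ≤ T.length) :
    ∃ T' : List (List ℕ), T'.getD i [] = insertRow (T.getD (i - 1) []) (T.getD i []) i x ∧
      (∀ j ≠ i, T'.getD j [] = T.getD j []) ∧ T.length ≤ T'.length ∧
      T'.length ≤ max T.length (i + 1) ∧
      (heckeAux (f + 1) x T i = T' ∨
        ∃ y ∈ T.getD i [], x < y ∧ heckeAux (f + 1) x T i = heckeAux f y T' (i + 1)) := by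
  set R := T.getD i []
  have hset := fun r => getD_setRow_self (T := T) r hi
  have hne := fun r j => getD_setRow_of_ne (T := T) (j := j) r hi
  have hlen := fun r => length_setRow (T := T) r hi
  by_cases hall : R.all (· ≤ x)
  · by_cases hc : x ∉ R ∧ (i = 0 ∨ (R.length < (T.getD (i - 1) []).length ∧
        (T.getD (i - 1) []).getD R.length 0 < x))
    · refine ⟨setRow T i (R ++ [x]), by rw [hset, insertRow, if_pos hall, if_pos hc],
        fun j hj => hne _ j hj, by simp [hlen], by simp [hlen], Or.inl ?_⟩
      rw [heckeAux]
      exact (if_pos hall).trans (if_pos hc)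
    · refine ⟨T, by rw [insertRow, if_pos hall, if_neg hc], fun _ _ => rfl, le_rfl,
        le_max_left _ _, Or.inl ?_⟩
      rw [heckeAux]
      exact (if_pos hall).trans (if_neg hc)
  · set p := (R.takeWhile (· ≤ x)).length
    have hp : p < R.length := length_takeWhile_lt_of_not_all hall
    have hiT : i < T.length := lt_length_of_mem_getD (List.getElem_mem hp)
    have hxy : x < R[p] := by simpa using not_getElem_length_takeWhile hp
    refine ⟨setRow T i (insertRow (T.getD (i - 1) []) R i x), hset _, fun j hj => hne _ j hj,
      by simp [hlen], by simp [hlen], Or.inr ⟨R[p], List.getElem_mem hp, hxy, ?_⟩⟩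
    rw [heckeAux]
    refine (if_neg hall).trans ?_
    dsimp only
    rw [insertRow, if_neg hall, List.getD_eq_getElem _ _ hp]
    split_ifs
    · rfl
    · rw [show setRow T i R = T by simp [setRow, hiT, R]]

lemma getD_heckeAux_of_lt (f x : ℕ) {i j : ℕ} {T : List (List ℕ)} (hi : i ≤ T.length)
    (hj : j < i) : (heckeAux f x T i).getD j [] = T.getD j [] := by
  induction f generalizing x i T with
  | zero => rw [heckeAux]
  | succ f ih =>
    obtain ⟨T', -, hT'j, hlen, -, hstop | ⟨y, hy, -, hbump⟩⟩ := exists_heckeAux_succ f x i hi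
    · rw [hstop, hT'j j hj.ne]
    · have hiT := lt_length_of_mem_getD hy
      rw [hbump, ih y (by omega) (by omega), hT'j j hj.ne]

lemma getD_heckeAux_self (f x i : ℕ) {T : List (List ℕ)} (hi : i ≤ T.length) :
    (heckeAux (f + 1) x T i).getD i [] = insertRow (T.getD (i - 1) []) (T.getD i []) i x := by
  obtain ⟨T', hT'i, -, hlen, -, hstop | ⟨y, hy, -, hbump⟩⟩ := exists_heckeAux_succ f x i hi
  · rw [hstop, hT'i]
  · have hiT := lt_length_of_mem_getD hy
    rw [hbump, getD_heckeAux_of_lt f y (by omega) (by omega), hT'i]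

def IsRowStrictTableau (q : ℕ) (T : List (List ℕ)) : Prop :=
  T.length ≤ q ∧ ∀ r, (T.getD r []).Pairwise (· < ·) ∧ ∀ a ∈ T.getD r [], r < a ∧ a ≤ q

lemma pairwise_set_of_lt {α : Type*} [Preorder α] {R : List α} {p : ℕ} {x : α}
    (hR : R.Pairwise (· < ·)) (hp : p < R.length) (hlow : ∀ j (hj : j < p), R[j] < x)
    (hhigh : x < R[p]) : (R.set p x).Pairwise (· < ·) := by
  rw [List.pairwise_iff_getElem] at hR ⊢
  intro j j' hj hj' hjj'
  simp only [List.length_set] at hj hj'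
  simp only [List.getElem_set]
  split_ifs with h1 h2 h2
  · omega
  · exact hhigh.trans (h1 ▸ hR p j' hp hj' (h1 ▸ hjj'))
  · exact hlow j (h2 ▸ hjj')
  · exact hR j j' hj hj' hjj'

lemma pairwise_insertRow {above R : List ℕ} {i x : ℕ} (hR : R.Pairwise (· < ·)) :
    (insertRow above R i x).Pairwise (· < ·) := by
  unfold insertRow
  split_ifs with hall hc hc
  · refine List.pairwise_append.mpr ⟨hR, List.pairwise_singleton _ _, fun a ha b hb => ?_⟩
    rw [List.mem_singleton.mp hb]
    exact lt_of_le_of_ne (by simpa using List.all_eq_true.mp hall a ha) fun h => hc.1 (h ▸ ha)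
  · exact hR
  · set p := (R.takeWhile (· ≤ x)).length
    have hp : p < R.length := length_takeWhile_lt_of_not_all hall
    refine pairwise_set_of_lt hR hp (fun j hj => ?_)
      (by simpa using not_getElem_length_takeWhile hp)
    rcases hc.1 with h0 | hlt
    · omega
    · rw [List.getD_eq_getElem _ _ (by omega)] at hlt
      rcases (show j = p - 1 ∨ j < p - 1 by omega) with rfl | hj'
      · exact hlt
      · exact (List.pairwise_iff_getElem.mp hR _ _ _ _ hj').trans hlt
  · exact hR

lemma mem_insertRow {above R : List ℕ} {i x a : ℕ} (h : a ∈ insertRow above R i x) :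
    a ∈ R ∨ a = x := by
  unfold insertRow at h
  split_ifs at h
  · simpa using h
  · exact Or.inl h
  · exact List.mem_or_eq_of_mem_set h
  · exact Or.inl h

lemma isRowStrictTableau_heckeAux {T : List (List ℕ)} (hT : IsRowStrictTableau q T) (f : ℕ)
    {x i : ℕ} (hi : i ≤ T.length) (hix : i < x) (hxq : x ≤ q) :
    IsRowStrictTableau q (heckeAux f x T i) := by
  induction f generalizing x i T with
  | zero => rwa [heckeAux]
  | succ f ih =>
    obtain ⟨T', hT'i, hT'j, hlen, hlen', hres⟩ := exists_heckeAux_succ f x i hi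
    have hT' : IsRowStrictTableau q T' := by
      refine ⟨by have := hT.1; omega, fun r => ?_⟩
      by_cases hr : r = i
      · subst hr
        rw [hT'i]
        refine ⟨pairwise_insertRow (hT.2 r).1, fun a ha => ?_⟩
        rcases mem_insertRow ha with ha | rfl
        exacts [(hT.2 r).2 a ha, ⟨hix, hxq⟩]
      · rw [hT'j r hr]
        exact hT.2 r
    rcases hres with hstop | ⟨y, hy, hxy, hbump⟩
    · rwa [hstop]
    · have hiT := lt_length_of_mem_getD hy
      rw [hbump]
      exact ih hT' (by omega) (by omega) ((hT.2 i).2 y hy).2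

lemma isRowStrictTableau_heckeInsert {T : List (List ℕ)} (hT : IsRowStrictTableau q T) {x : ℕ}
    (hx : x ∈ List.range' 1 q) : IsRowStrictTableau q (heckeInsert T x) := by
  rw [List.mem_range'_1] at hx
  exact isRowStrictTableau_heckeAux hT _ (Nat.zero_le _) (by omega) (by omega)

lemma isRowStrictTableau_foldl_heckeInsert {T : List (List ℕ)} (hT : IsRowStrictTableau q T)
    {w : List ℕ} (hw : w ⊆ List.range' 1 q) : IsRowStrictTableau q (w.foldl heckeInsert T) := by
  induction w generalizing T with
  | nil => exact hT
  | cons a w ih =>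
    exact ih (isRowStrictTableau_heckeInsert hT (hw List.mem_cons_self)) (List.cons_subset.mp hw).2

def staircaseRow (q r : ℕ) : List ℕ := List.range' (r + 1) (q - r)

def HasFullRows (q k : ℕ) (T : List (List ℕ)) : Prop :=
  ∀ r < k, T.getD r [] = staircaseRow q r

lemma HasFullRows.le_length {k : ℕ} {T : List (List ℕ)} (h : HasFullRows q k T) (hk : k ≤ q) :
    k ≤ T.length := by
  rcases Nat.eq_zero_or_pos k with rfl | hk0
  · exact Nat.zero_le _
  · have hmem : k ∈ T.getD (k - 1) [] := by
      rw [h (k - 1) (by omega), staircaseRow, List.mem_range'_1]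
      omega
    have := lt_length_of_mem_getD hmem
    omega

lemma mem_staircaseRow {r a : ℕ} : a ∈ staircaseRow q r ↔ r < a ∧ a ≤ q := by
  rw [staircaseRow, List.mem_range'_1]
  omega

lemma length_staircaseRow (r : ℕ) : (staircaseRow q r).length = q - r := by
  simp [staircaseRow]

lemma getElem_staircaseRow {r j : ℕ} (hj : j < (staircaseRow q r).length) :
    (staircaseRow q r)[j] = r + 1 + j := by
  simp [staircaseRow]

lemma length_takeWhile_staircaseRow {r v : ℕ} (hrv : r ≤ v) (hvq : v < q) :
    ((staircaseRow q r).takeWhile (· ≤ v)).length = v - r := by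
  rw [length_takeWhile_eq_findIdx, List.findIdx_eq (by rw [length_staircaseRow]; omega)]
  simp only [getElem_staircaseRow, Bool.not_eq_true', Bool.not_eq_false', decide_eq_true_eq,
    decide_eq_false_iff_not]
  exact ⟨by omega, fun j hj => by omega⟩

lemma heckeAux_succ_of_getD_eq_staircaseRow {f v r : ℕ} {T : List (List ℕ)}
    (hrow : T.getD r [] = staircaseRow q r) (hrv : r < v) (hvq : v ≤ q) :
    heckeAux (f + 1) v T r = if v = q then T else heckeAux f (v + 1) T (r + 1) := by
  rw [heckeAux]
  dsimp only
  rw [hrow]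
  by_cases hv : v = q
  · have hall : (staircaseRow q r).all (· ≤ v) := List.all_eq_true.mpr fun a ha => by
      simpa [hv] using (mem_staircaseRow.mp ha).2
    rw [if_pos hall, if_neg fun hc => hc.1 (mem_staircaseRow.mpr ⟨hrv, hvq⟩), if_pos hv]
  · have hall : ¬ (staircaseRow q r).all (· ≤ v) := fun h => by
      have := List.all_eq_true.mp h q (mem_staircaseRow.mpr ⟨by omega, le_rfl⟩)
      simp only [decide_eq_true_eq] at this
      omega
    have hlen := length_staircaseRow (q := q) r
    rw [if_neg hall, if_neg hv, length_takeWhile_staircaseRow hrv.le (by omega),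
      List.getD_eq_getElem _ _ (by omega), List.getD_eq_getElem _ _ (by omega),
      getElem_staircaseRow, getElem_staircaseRow, if_neg (by omega)]
    congr 1
    omega

lemma heckeAux_of_hasFullRows {k j r v f : ℕ} {T : List (List ℕ)} (hfull : HasFullRows q k T)
    (hrk : r + j = k) (hrv : r < v) (hvq : v ≤ q) (hjf : j ≤ f) :
    heckeAux (f + 1) v T r = if q < v + j then T else heckeAux (f - j + 1) (v + j) T k := by
  induction j generalizing r v f with
  | zero => simp [← hrk, show ¬ q < v by omega]
  | succ j ih =>
    rw [heckeAux_succ_of_getD_eq_staircaseRow (hfull r (by omega)) hrv hvq]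
    by_cases hv : v = q
    · rw [if_pos hv, if_pos (by omega)]
    · obtain ⟨f, rfl⟩ : ∃ f', f = f' + 1 := ⟨f - 1, by omega⟩
      rw [if_neg hv, ih (by omega) (by omega) (by omega) (by omega),
        show v + 1 + j = v + (j + 1) by omega, show f + 1 - (j + 1) = f - j by omega]

lemma heckeInsert_of_hasFullRows {k x : ℕ} {T : List (List ℕ)} (hfull : HasFullRows q k T)
    (hk : k ≤ q) (hx : x ∈ List.range' 1 q) :
    heckeInsert T x = if q < x + k then T else heckeAux (T.length - k + 1) (x + k) T k := by
  rw [List.mem_range'_1] at hx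
  exact heckeAux_of_hasFullRows hfull (Nat.zero_add k) (by omega) (by omega) (hfull.le_length hk)

lemma range'_prefix_iff {L : List ℕ} {s t : ℕ} :
    List.range' s t <+: L ↔ ∀ j < t, L[j]? = some (s + j) := by
  rw [List.prefix_iff_getElem?]
  simp

lemma range'_prefix_insertRow {above R : List ℕ} {k t v : ℕ}
    (hpre : List.range' (k + 1) t <+: R) (hkv : k < v) :
    List.range' (k + 1) t <+: insertRow above R k v := by
  unfold insertRow
  split_ifs with hall hc hc
  · exact hpre.trans (List.prefix_append _ _)
  · exact hpre
  · set p := (R.takeWhile (· ≤ v)).length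
    have hp : p < R.length := length_takeWhile_lt_of_not_all hall
    have hvp : v < R[p] := by simpa using not_getElem_length_takeWhile hp
    have hR := range'_prefix_iff.mp hpre
    have htp : t ≤ p := by
      by_contra! hpt
      have hRp : R[p] = k + 1 + p := by simpa [List.getElem?_eq_getElem hp] using hR p hpt
      rcases hc.1 with h0 | hlt
      · omega
      · rw [List.getD_eq_getElem?_getD, hR (p - 1) (by omega)] at hlt
        simp only [Option.getD_some] at hlt
        omega
    rw [List.prefix_iff_eq_take, List.length_range'] at hpre ⊢
    rwa [List.take_set_of_le htp]
  · exact hpre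

lemma insertRow_eq_append {above R : List ℕ} {i x : ℕ} (hR : ∀ a ∈ R, a < x)
    (hcol : i = 0 ∨ (R.length < above.length ∧ above.getD R.length 0 < x)) :
    insertRow above R i x = R ++ [x] := by
  have hall : R.all (· ≤ x) := List.all_eq_true.mpr fun a ha => by simpa using (hR a ha).le
  rw [insertRow, if_pos hall, if_pos ⟨fun h => (hR x h).false, hcol⟩]

lemma insertRow_eq_set {above R : List ℕ} {i x t : ℕ} (ht : t < R.length)
    (hlow : ∀ j (hj : j < t), R[j] < x) (hhigh : x < R[t]) (hcol : i = 0 ∨ above.getD t 0 < x) :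
    insertRow above R i x = R.set t x := by
  have hall : ¬ R.all (· ≤ x) := fun h => by
    have := List.all_eq_true.mp h _ (List.getElem_mem ht)
    simp only [decide_eq_true_eq] at this
    omega
  have hp : (R.takeWhile (· ≤ x)).length = t := by
    rw [length_takeWhile_eq_findIdx, List.findIdx_eq ht]
    simp only [Bool.not_eq_true', Bool.not_eq_false', decide_eq_true_eq, decide_eq_false_iff_not]
    exact ⟨hhigh.not_ge, fun j hj => (hlow j hj).le⟩
  have hbump : (t = 0 ∨ R.getD (t - 1) 0 < x) := by
    rcases Nat.eq_zero_or_pos t with ht0 | ht0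
    · exact Or.inl ht0
    · exact Or.inr (by rw [List.getD_eq_getElem _ _ (by omega)]; exact hlow _ (by omega))
  rw [insertRow, if_neg hall, hp, if_pos ⟨hbump, hcol⟩]

lemma getElem?_insertRow_of_getElem_eq {above R : List ℕ} {i x t : ℕ} (ht : t < R.length)
    (hx : R[t] = x) : (insertRow above R i x)[t]? = some x := by
  have hRt : R[t]? = some x := by rw [List.getElem?_eq_getElem ht, hx]
  unfold insertRow
  split_ifs with hall hc hbump
  · exact absurd (hx ▸ List.getElem_mem ht) hc.1
  · exact hRt
  · set p := (R.takeWhile (· ≤ x)).length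
    have hp : p < R.length := length_takeWhile_lt_of_not_all hall
    have hxp : x < R[p] := by simpa using not_getElem_length_takeWhile hp
    rw [List.getElem?_set_ne (fun h => by simp only [h] at hxp; omega)]
    exact hRt
  · exact hRt

lemma range'_succ_prefix_insertRow {above R : List ℕ} {k t : ℕ} (hR : R.Pairwise (· < ·))
    (hRk : ∀ a ∈ R, k < a) (habove : 0 < k → above = staircaseRow q (k - 1)) (hkt : k + t < q)
    (hpre : List.range' (k + 1) t <+: R) :
    List.range' (k + 1) (t + 1) <+: insertRow above R k (k + t + 1) := by
  have htR : t ≤ R.length := by simpa using hpre.length_le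
  have hRj : ∀ j (hj : j < t), R[j] = k + 1 + j := fun j hj => by
    rw [← hpre.getElem (by simpa using hj)]
    simp
  have hcol : k = 0 ∨ (t < above.length ∧ above.getD t 0 < k + t + 1) := by
    rcases Nat.eq_zero_or_pos k with hk | hk
    · exact Or.inl hk
    · rw [habove hk, List.getD_eq_getElem _ _ (by rw [length_staircaseRow]; omega),
        getElem_staircaseRow, length_staircaseRow]
      omega
  suffices h : (insertRow above R k (k + t + 1))[t]? = some (k + t + 1) by
    refine range'_prefix_iff.mpr fun j hj => ?_
    rcases (show j < t ∨ j = t by omega) with hj | rfl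
    · exact range'_prefix_iff.mp (range'_prefix_insertRow hpre (by omega)) j hj
    · rw [h]
      congr 1
      omega
  by_cases hRt : t < R.length
  · have hge : k + t + 1 ≤ R[t] := by
      rcases Nat.eq_zero_or_pos t with rfl | ht
      · simpa using hRk _ (List.getElem_mem hRt)
      · have := List.pairwise_iff_getElem.mp hR (t - 1) t (by omega) hRt (by omega)
        rw [hRj (t - 1) (by omega)] at this
        omega
    rcases hge.eq_or_lt with heq | hlt
    · exact getElem?_insertRow_of_getElem_eq hRt heq.symm
    · rw [insertRow_eq_set hRt (fun j hj => by rw [hRj j hj]; omega) hlt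
        (hcol.imp_right fun h => h.2), List.getElem?_set_self hRt]
  · have hlen : R.length = t := by omega
    rw [insertRow_eq_append (fun a ha => ?_) (hlen ▸ hcol), ← hlen, List.getElem?_concat_length]
    obtain ⟨j, hj, rfl⟩ := List.getElem_of_mem ha
    rw [hRj j (by omega)]
    omega

def StaircasePrefix (q k t : ℕ) (T : List (List ℕ)) : Prop :=
  HasFullRows q k T ∧ List.range' (k + 1) t <+: T.getD k []

lemma staircasePrefix_heckeInsert {k t x : ℕ} {T : List (List ℕ)} (h : StaircasePrefix q k t T)
    (hk : k ≤ q) (hx : x ∈ List.range' 1 q) : StaircasePrefix q k t (heckeInsert T x) := by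
  have hkT := h.1.le_length hk
  rw [heckeInsert_of_hasFullRows h.1 hk hx]
  split_ifs
  · exact h
  · refine ⟨fun r hr => ?_, ?_⟩
    · rw [getD_heckeAux_of_lt _ _ hkT hr]
      exact h.1 r hr
    · rw [getD_heckeAux_self _ _ _ hkT]
      exact range'_prefix_insertRow h.2 (by rw [List.mem_range'_1] at hx; omega)

lemma staircasePrefix_heckeInsert_succ {k t : ℕ} {T : List (List ℕ)}
    (hT : IsRowStrictTableau q T) (h : StaircasePrefix q k t T) (hkt : k + t < q) :
    StaircasePrefix q k (t + 1) (heckeInsert T (t + 1)) := by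
  have hkT := h.1.le_length (by omega)
  rw [heckeInsert_of_hasFullRows h.1 (by omega) (by rw [List.mem_range'_1]; omega),
    if_neg (by omega)]
  refine ⟨fun r hr => ?_, ?_⟩
  · rw [getD_heckeAux_of_lt _ _ hkT hr]
    exact h.1 r hr
  · rw [getD_heckeAux_self _ _ _ hkT, show t + 1 + k = k + t + 1 by omega]
    exact range'_succ_prefix_insertRow (hT.2 k).1 (fun a ha => ((hT.2 k).2 a ha).1)
      (fun hk => h.1 (k - 1) (by omega)) hkt h.2

lemma staircasePrefix_foldl_heckeInsert {k t : ℕ} {T : List (List ℕ)}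
    (h : StaircasePrefix q k t T) (hk : k ≤ q) {w : List ℕ} (hw : w ⊆ List.range' 1 q) :
    StaircasePrefix q k t (w.foldl heckeInsert T) := by
  induction w generalizing T with
  | nil => exact h
  | cons a w ih =>
    exact ih (staircasePrefix_heckeInsert h hk (hw List.mem_cons_self)) (List.cons_subset.mp hw).2

lemma staircasePrefix_foldl_heckeInsert_succ {k t : ℕ} {T : List (List ℕ)}
    (hT : IsRowStrictTableau q T) (h : StaircasePrefix q k t T) (hkt : k + t < q) {w : List ℕ}
    (hw : w ⊆ List.range' 1 q) (hmem : t + 1 ∈ w) :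
    StaircasePrefix q k (t + 1) (w.foldl heckeInsert T) := by
  obtain ⟨s, u, rfl⟩ := List.append_of_mem hmem
  have hs : s ⊆ List.range' 1 q := fun a ha => hw (List.mem_append_left _ ha)
  have hu : u ⊆ List.range' 1 q := fun a ha =>
    hw (List.mem_append_right _ (List.mem_cons_of_mem _ ha))
  rw [List.foldl_append, List.foldl_cons]
  exact staircasePrefix_foldl_heckeInsert (staircasePrefix_heckeInsert_succ
    (isRowStrictTableau_foldl_heckeInsert hT hs) (staircasePrefix_foldl_heckeInsert h (by omega) hs)
    hkt) (by omega) hu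

lemma StaircasePrefix.add_le {k t : ℕ} {T : List (List ℕ)} (hT : IsRowStrictTableau q T)
    (h : StaircasePrefix q k t T) (hk : k ≤ q) : k + t ≤ q := by
  rcases Nat.eq_zero_or_pos t with rfl | ht
  · exact hk
  · have hmem : k + t ∈ T.getD k [] := h.2.subset (List.mem_range'_1.mpr ⟨by omega, by omega⟩)
    exact ((hT.2 k).2 _ hmem).2

lemma length_le_sub_of_pairwise_lt {R : List ℕ} {k : ℕ} (hR : R.Pairwise (· < ·))
    (hb : ∀ a ∈ R, k < a ∧ a ≤ q) : R.length ≤ q - k := by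
  classical
  rw [← List.toFinset_card_of_nodup (hR.imp ne_of_lt), ← Nat.card_Ioc]
  exact Finset.card_le_card fun a ha => Finset.mem_Ioc.mpr (hb a (List.mem_toFinset.mp ha))

lemma StaircasePrefix.succ_zero {k : ℕ} {T : List (List ℕ)} (hT : IsRowStrictTableau q T)
    (h : StaircasePrefix q k (q - k) T) : StaircasePrefix q (k + 1) 0 T := by
  refine ⟨fun r hr => ?_, List.nil_prefix⟩
  rcases (show r < k ∨ r = k by omega) with hr | rfl
  · exact h.1 r hr
  · refine (h.2.eq_of_length (le_antisymm h.2.length_le ?_)).symm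
    simpa using length_le_sub_of_pairwise_lt (hT.2 r).1 (hT.2 r).2

/-- As `t ≤ q`, the weight `(q + 1) * k + t` orders the pairs `(k, t)` lexicographically. -/
def HasStaircaseProgress (q m : ℕ) (T : List (List ℕ)) : Prop :=
  ∃ k t, k ≤ q ∧ StaircasePrefix q k t T ∧ m ≤ (q + 1) * k + t

lemma HasStaircaseProgress.mono {m m' : ℕ} {T : List (List ℕ)} (h : HasStaircaseProgress q m T)
    (hm : m' ≤ m) : HasStaircaseProgress q m' T :=
  let ⟨k, t, hk, hkt, hm'⟩ := h
  ⟨k, t, hk, hkt, hm.trans hm'⟩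

lemma hasStaircaseProgress_foldl_heckeInsert {m : ℕ} {T : List (List ℕ)}
    (h : HasStaircaseProgress q m T) {w : List ℕ} (hw : w ⊆ List.range' 1 q) :
    HasStaircaseProgress q m (w.foldl heckeInsert T) :=
  let ⟨k, t, hk, hkt, hm⟩ := h
  ⟨k, t, hk, staircasePrefix_foldl_heckeInsert hkt hk hw, hm⟩

/-- A full row `k` is traded for an empty row `k + 1`. -/
lemma HasStaircaseProgress.exists_staircasePrefix {m : ℕ} {T : List (List ℕ)}
    (hT : IsRowStrictTableau q T) (h : HasStaircaseProgress q m T) :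
    ∃ k t, k ≤ q ∧ StaircasePrefix q k t T ∧ m ≤ (q + 1) * k + t ∧ (k = q ∨ k + t < q) := by
  obtain ⟨k, t, hk, hkt, hm⟩ := h
  have hle := hkt.add_le hT hk
  by_cases hnormal : k = q ∨ k + t < q
  · exact ⟨k, t, hk, hkt, hm, hnormal⟩
  · obtain rfl : t = q - k := by omega
    refine ⟨k + 1, 0, by omega, hkt.succ_zero hT, ?_, by omega⟩
    rw [Nat.mul_succ]
    omega

lemma HasStaircaseProgress.foldl_heckeInsert_succ {m : ℕ} {T : List (List ℕ)}
    (hT : IsRowStrictTableau q T) (h : HasStaircaseProgress q m T) (hm : m < (q + 1) * q)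
    {b : List ℕ} (hb : b ⊆ List.range' 1 q) (hcomplete : List.range' 1 q ⊆ b) :
    HasStaircaseProgress q (m + 1) (b.foldl heckeInsert T) := by
  obtain ⟨k, t, hk, hkt, hm', rfl | hlt⟩ := h.exists_staircasePrefix hT
  · exact ⟨k, t, hk, staircasePrefix_foldl_heckeInsert hkt hk hb, by omega⟩
  · refine ⟨k, t + 1, hk, staircasePrefix_foldl_heckeInsert_succ hT hkt hlt hb ?_, by omega⟩
    exact hcomplete (List.mem_range'_1.mpr ⟨by omega, by omega⟩)

lemma hasStaircaseProgress_foldl_flatten {m : ℕ} {T : List (List ℕ)}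
    (hT : IsRowStrictTableau q T) (h : HasStaircaseProgress q m T) {bs : List (List ℕ)}
    (hw : bs.flatten ⊆ List.range' 1 q) (hbs : ∀ b ∈ bs, List.range' 1 q ⊆ b) :
    HasStaircaseProgress q (min (m + bs.length) ((q + 1) * q))
      (bs.flatten.foldl heckeInsert T) := by
  induction bs generalizing m T with
  | nil => exact h.mono (min_le_left _ _)
  | cons b bs ih =>
    by_cases hm : m < (q + 1) * q
    · rw [List.flatten_cons, List.foldl_append]
      rw [List.flatten_cons, List.append_subset] at hw
      have := ih (isRowStrictTableau_foldl_heckeInsert hT hw.1)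
        (h.foldl_heckeInsert_succ hT hm hw.1 (hbs b List.mem_cons_self)) hw.2
        (fun c hc => hbs c (List.mem_cons_of_mem _ hc))
      rwa [List.length_cons, ← add_assoc, Nat.add_right_comm]
    · exact (hasStaircaseProgress_foldl_heckeInsert h hw).mono (by omega)

lemma HasStaircaseProgress.hasFullRows {T : List (List ℕ)} (hT : IsRowStrictTableau q T)
    (h : HasStaircaseProgress q ((q + 1) * q) T) : HasFullRows q q T := by
  obtain ⟨k, t, hk, hkt, hm⟩ := h
  rcases hk.eq_or_lt with rfl | hk
  · exact hkt.1
  · have hle := hkt.add_le hT hk.le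
    have : (q + 1) * (k + 1) ≤ (q + 1) * q := Nat.mul_le_mul_left _ hk
    rw [Nat.mul_succ] at this
    omega

lemma map_length_eq_staircase {T : List (List ℕ)} (hT : IsRowStrictTableau q T)
    (h : HasFullRows q q T) : T.map List.length = staircase q := by
  have hlen : T.length = q := le_antisymm hT.1 (h.le_length le_rfl)
  refine List.ext_getElem (by simp [staircase, hlen]) fun r h1 h2 => ?_
  simp only [List.length_map] at h1
  have hr := h r (by omega)
  rw [List.getD_eq_getElem _ _ h1] at hr
  simp [staircase, hr, length_staircaseRow]

lemma heckeShape_flatten_append_eq_staircase {bs : List (List ℕ)} {rest : List ℕ}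
    (hw : bs.flatten ++ rest ⊆ List.range' 1 q) (hbs : ∀ b ∈ bs, List.range' 1 q ⊆ b)
    (hlen : (q + 1) * q ≤ bs.length) : heckeShape (bs.flatten ++ rest) = staircase q := by
  rw [List.append_subset] at hw
  have hT₀ : IsRowStrictTableau q [] := ⟨Nat.zero_le _, fun r => by simp⟩
  have h₀ : HasStaircaseProgress q 0 [] :=
    ⟨0, 0, Nat.zero_le _, ⟨fun _ h => absurd h (Nat.not_lt_zero _), List.nil_prefix⟩, le_rfl⟩
  have hT := isRowStrictTableau_foldl_heckeInsert
    (isRowStrictTableau_foldl_heckeInsert hT₀ hw.1) hw.2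
  have hprog := hasStaircaseProgress_foldl_heckeInsert
    (hasStaircaseProgress_foldl_flatten hT₀ h₀ hw.1 hbs) hw.2
  rw [heckeShape, heckeP, List.foldl_append]
  exact map_length_eq_staircase hT ((hprog.mono (by omega)).hasFullRows hT)

end HeckeInsertion

section Blocks

lemma flatten_map_range_take_drop_append {α : Type*} (l : List α) (B m : ℕ) :
    ((List.range m).map fun j => (l.drop (j * B)).take B).flatten ++ l.drop (m * B) = l := by
  induction m with
  | zero => simp
  | succ m ih =>
    rw [List.range_succ, List.map_append, List.flatten_append, List.append_assoc]
    simp only [List.map_cons, List.map_nil, List.flatten_cons, List.flatten_nil, List.append_nil]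
    rw [Nat.succ_mul, ← List.drop_drop, List.take_append_drop, ih]

def wordBlock (n B j : ℕ) : Finset (Fin n) :=
  univ.filter fun i => j * B ≤ i ∧ (i : ℕ) < j * B + B

def HasCompleteBlocks {n q : ℕ} (w : Fin n → Fin q) : Prop :=
  ∀ j < (q + 1) ^ 2, ∀ a : Fin q, ∃ i ∈ wordBlock n (n / (q + 1) ^ 2) j, w i = a

lemma mem_take_drop_toWord {n q B j : ℕ} (w : Fin n → Fin q) {i : Fin n}
    (hi : i ∈ wordBlock n B j) : (w i : ℕ) + 1 ∈ ((toWord w).drop (j * B)).take B := by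
  simp only [wordBlock, mem_filter, mem_univ, true_and] at hi
  refine List.mem_iff_getElem.mpr ⟨i - j * B, by
    simp only [toWord, List.length_take, List.length_drop, List.length_ofFn]
    omega, ?_⟩
  simp only [toWord, List.getElem_take, List.getElem_drop, List.getElem_ofFn]
  congr 3
  exact Fin.ext (by simp only; omega)

lemma toWord_subset_range' {n q : ℕ} (w : Fin n → Fin q) : toWord w ⊆ List.range' 1 q := by
  intro a ha
  obtain ⟨i, rfl⟩ := List.mem_ofFn.mp ha
  exact List.mem_range'_1.mpr ⟨by omega, by have := (w i).isLt; omega⟩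

lemma HasCompleteBlocks.heckeW_and_heckeShape {n q : ℕ} {w : Fin n → Fin q}
    (hw : HasCompleteBlocks w) :
    heckeW q (toWord w) = Fin.revPerm ∧ heckeShape (toWord w) = staircase q := by
  set B := n / (q + 1) ^ 2
  set bs := (List.range ((q + 1) ^ 2)).map fun j => ((toWord w).drop (j * B)).take B
  set rest := (toWord w).drop ((q + 1) ^ 2 * B)
  have hsplit : bs.flatten ++ rest = toWord w := flatten_map_range_take_drop_append _ _ _
  have hbs : ∀ b ∈ bs, List.range' 1 q ⊆ b := by
    intro b hb a ha
    obtain ⟨j, hj, rfl⟩ := List.mem_map.mp hb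
    obtain ⟨i, hi, hia⟩ :=
      hw j (List.mem_range.mp hj) ⟨a - 1, by rw [List.mem_range'_1] at ha; omega⟩
    have := mem_take_drop_toWord w hi
    rwa [hia, Nat.sub_add_cancel (List.mem_range'_1.mp ha).1] at this
  have hlen : bs.length = (q + 1) ^ 2 := by simp [bs]
  have hlenPerm : lenPerm q Fin.revPerm ≤ bs.length := by
    rw [lenPerm_revPerm, hlen]
    exact (card_le_univ _).trans (by simp [sq])
  have hW := heckeW_flatten_append_eq_revPerm hbs hlenPerm rest
  have hS := heckeShape_flatten_append_eq_staircase (bs := bs) (rest := rest)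
    (hsplit ▸ toWord_subset_range' w) hbs
    (hlen ▸ sq (q + 1) ▸ Nat.mul_le_mul_left _ (Nat.le_succ q))
  rw [hsplit] at hW hS
  exact ⟨hW, hS⟩

end Blocks

section Counting

lemma card_filter_forall_mem_ne {ι β : Type*} [Fintype ι] [DecidableEq ι] [Fintype β]
    [DecidableEq β] (s : Finset ι) (b : β) :
    #(univ.filter fun f : ι → β => ∀ i ∈ s, f i ≠ b) =
      (Fintype.card β - 1) ^ #s * Fintype.card β ^ (Fintype.card ι - #s) := by
  have : (univ.filter fun f : ι → β => ∀ i ∈ s, f i ≠ b) =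
      Fintype.piFinset fun i => if i ∈ s then univ.erase b else univ := by
    ext f
    simp only [mem_filter, mem_univ, true_and, Fintype.mem_piFinset]
    refine ⟨fun h i => ?_, fun h i hi => ?_⟩
    · split_ifs with hi
      exacts [mem_erase.mpr ⟨h i hi, mem_univ _⟩, mem_univ _]
    · simpa [hi] using h i
  rw [this, Fintype.card_piFinset]
  simp only [apply_ite Finset.card, card_erase_of_mem (mem_univ b), card_univ]
  rw [prod_ite, prod_const, prod_const, filter_mem_eq_inter, univ_inter, filter_not,
    filter_mem_eq_inter, univ_inter, card_sdiff_of_subset (subset_univ _), card_univ]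

lemma card_wordBlock {n B j : ℕ} (h : j * B + B ≤ n) : #(wordBlock n B j) = B := by
  have himage : (wordBlock n B j).image Fin.val = Finset.Ico (j * B) (j * B + B) := by
    ext m
    simp only [wordBlock, mem_image, mem_filter, mem_univ, true_and, mem_Ico]
    exact ⟨fun ⟨i, hi, him⟩ => him ▸ hi, fun hm => ⟨⟨m, by omega⟩, hm, rfl⟩⟩
  rw [← card_image_of_injective _ Fin.val_injective, himage, Nat.card_Ico]
  omega

instance {n q : ℕ} : DecidablePred (@HasCompleteBlocks n q) := fun w => by
  unfold HasCompleteBlocks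
  infer_instance

lemma card_filter_not_hasCompleteBlocks_le (n q : ℕ) :
    #(univ.filter fun w : Fin n → Fin q => ¬ HasCompleteBlocks w) ≤
      (q + 1) ^ 2 * q * ((q - 1) ^ (n / (q + 1) ^ 2) * q ^ (n - n / (q + 1) ^ 2)) := by
  set B := n / (q + 1) ^ 2
  have hsub : (univ.filter fun w : Fin n → Fin q => ¬ HasCompleteBlocks w) ⊆
      (range ((q + 1) ^ 2)).biUnion fun j => univ.biUnion fun a : Fin q =>
        univ.filter fun w : Fin n → Fin q => ∀ i ∈ wordBlock n B j, w i ≠ a := by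
    intro w hw
    have hw := (mem_filter.mp hw).2
    unfold HasCompleteBlocks at hw
    push Not at hw
    obtain ⟨j, hj, a, ha⟩ := hw
    simp only [mem_biUnion, mem_range, mem_univ, mem_filter, true_and]
    exact ⟨j, hj, a, ha⟩
  have hblock : ∀ j ∈ range ((q + 1) ^ 2), ∀ a : Fin q,
      #(univ.filter fun w : Fin n → Fin q => ∀ i ∈ wordBlock n B j, w i ≠ a) =
        (q - 1) ^ B * q ^ (n - B) := by
    intro j hj a
    have hjB : j * B + B ≤ n := calc
      j * B + B = (j + 1) * B := (Nat.succ_mul j B).symm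
      _ ≤ (q + 1) ^ 2 * B := Nat.mul_le_mul_right _ (mem_range.mp hj)
      _ ≤ n := Nat.mul_div_le n _
    have h := card_filter_forall_mem_ne (wordBlock n B j) a
    rw [card_wordBlock hjB, Fintype.card_fin, Fintype.card_fin] at h
    convert h using 3
  calc _ ≤ _ := card_le_card hsub
    _ ≤ ∑ j ∈ range ((q + 1) ^ 2), ∑ a : Fin q,
        #(univ.filter fun w : Fin n → Fin q => ∀ i ∈ wordBlock n B j, w i ≠ a) :=
      card_biUnion_le.trans (sum_le_sum fun _ _ => card_biUnion_le)
    _ = (q + 1) ^ 2 * q * ((q - 1) ^ B * q ^ (n - B)) := by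
      rw [sum_congr rfl fun j hj => sum_congr rfl fun a _ => hblock j hj a]
      simp [mul_assoc]

/-- The union bound, over the `(q + 1) ^ 2` blocks and the `q` letters, for the proportion of
words of length `n` in which some block misses some letter. -/
noncomputable def missingLetterBound (q n : ℕ) : ℝ :=
  ((q : ℝ) + 1) ^ 2 * q * (1 - 1 / q) ^ (n / (q + 1) ^ 2)

lemma one_sub_missingLetterBound_le_card_filter_div {n q : ℕ} (hq : 1 ≤ q)
    (P : (Fin n → Fin q) → Prop) [DecidablePred P] (hP : ∀ w, HasCompleteBlocks w → P w) :
    1 - missingLetterBound q n ≤ #(univ.filter P) / (q : ℝ) ^ n := by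
  set B := n / (q + 1) ^ 2
  have hqpos : (0 : ℝ) < q := by exact_mod_cast hq
  have htotal := card_filter_add_card_filter_not (s := (univ : Finset (Fin n → Fin q))) (p := P)
  rw [card_univ, Fintype.card_fun, Fintype.card_fin, Fintype.card_fin] at htotal
  have hbad : #(univ.filter fun w => ¬ P w) ≤ (q + 1) ^ 2 * q * ((q - 1) ^ B * q ^ (n - B)) :=
    (card_le_card fun w hw => by simpa using mt (hP w) (mem_filter.mp hw).2).trans
      (card_filter_not_hasCompleteBlocks_le n q)
  have hsplit : (q : ℝ) ^ n = q ^ B * q ^ (n - B) := by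
    rw [← pow_add, Nat.add_sub_cancel' (Nat.div_le_self _ _)]
  have hreal : ((q : ℝ) + 1) ^ 2 * q * (1 - 1 / q) ^ B * (q : ℝ) ^ n =
      (((q + 1) ^ 2 * q * ((q - 1) ^ B * q ^ (n - B)) : ℕ) : ℝ) := by
    rw [hsplit, one_sub_div hqpos.ne', div_pow]
    push_cast [Nat.cast_sub hq]
    field_simp
  rw [le_div_iff₀ (pow_pos hqpos n), sub_mul, one_mul, missingLetterBound, hreal,
    sub_le_iff_le_add]
  exact_mod_cast htotal.symm.le.trans (Nat.add_le_add_left hbad _)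

end Counting

section Asymptotics

open Real

lemma tendsto_rpow_mul_exp_neg_mul_rpow_atTop (s : ℝ) {β b : ℝ} (hβ : 0 < β) (hb : 0 < b) :
    Tendsto (fun x : ℝ => x ^ s * exp (-b * x ^ β)) atTop (𝓝 0) := by
  refine ((tendsto_rpow_mul_exp_neg_mul_atTop_nhds_zero (s / β) b hb).comp
    (tendsto_rpow_atTop hβ)).congr' ?_
  filter_upwards [eventually_ge_atTop 0] with x hx
  rw [Function.comp_apply, ← rpow_mul hx, mul_div_cancel₀ _ hβ.ne']

lemma one_sub_inv_pow_le_exp {x : ℝ} (hx : 1 ≤ x) (k : ℕ) : (1 - 1 / x) ^ k ≤ exp (-(k / x)) :=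
  calc (1 - 1 / x) ^ k ≤ exp (-(1 / x)) ^ k :=
        pow_le_pow_left₀ (sub_nonneg.mpr ((div_le_one (by linarith)).mpr hx))
          (one_sub_le_exp_neg _) k
    _ = exp (-(k / x)) := by rw [← exp_nat_mul]; ring_nf

lemma missingLetterBound_le {q : ℕ} (hq : 1 ≤ q) (n : ℕ) :
    missingLetterBound q n ≤ 4 * exp 1 * q ^ 3 * exp (-(n / (4 * q ^ 3))) := by
  rw [missingLetterBound]
  set B := n / (q + 1) ^ 2
  have hq' : (1 : ℝ) ≤ q := by exact_mod_cast hq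
  have hsq : ((q : ℝ) + 1) ^ 2 ≤ 4 * q ^ 2 := by nlinarith
  have hdiv : (n : ℝ) < ((q : ℝ) + 1) ^ 2 * (B + 1) := by
    exact_mod_cast Nat.lt_mul_div_succ n (by positivity : 0 < (q + 1) ^ 2)
  have hn : (n : ℝ) ≤ 4 * q ^ 2 * (B + 1) :=
    hdiv.le.trans (mul_le_mul_of_nonneg_right hsq (by positivity))
  have hnB : (n : ℝ) / (4 * q ^ 3) ≤ (B + 1) / q := by
    rw [div_le_div_iff₀ (by positivity) (by positivity)]
    nlinarith [mul_le_mul_of_nonneg_right hn (by positivity : (0 : ℝ) ≤ q)]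
  have hB1 : ((B : ℝ) + 1) / q ≤ B / q + 1 := by
    rw [add_div]
    gcongr
    exact (div_le_one (by linarith)).mpr hq'
  have hpow : (1 - 1 / (q : ℝ)) ^ B ≤ exp (1 + -(n / (4 * q ^ 3))) :=
    (one_sub_inv_pow_le_exp hq' B).trans (exp_le_exp.mpr (by linarith))
  have h0 : 0 ≤ (1 - 1 / (q : ℝ)) ^ B :=
    pow_nonneg (sub_nonneg.mpr ((div_le_one (by linarith)).mpr hq')) B
  calc _ ≤ 4 * q ^ 2 * q * exp (1 + -(n / (4 * q ^ 3))) := by gcongr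
    _ = 4 * exp 1 * q ^ 3 * exp (-(n / (4 * q ^ 3))) := by rw [exp_add]; ring

lemma tendsto_missingLetterBound {α c : ℝ} (hα : α < 1 / 3) (hc : 0 < c) {q : ℕ → ℕ}
    (hq1 : ∀ᶠ n in atTop, 1 ≤ q n) (hq : ∀ᶠ n : ℕ in atTop, (q n : ℝ) ≤ c * n ^ α) :
    Tendsto (fun n : ℕ => missingLetterBound (q n) n) atTop (𝓝 0) := by
  have hlim : Tendsto (fun n : ℕ => 4 * exp 1 * c ^ 3 *
      ((n : ℝ) ^ (3 * α) * exp (-(1 / (4 * c ^ 3)) * (n : ℝ) ^ (1 - 3 * α)))) atTop (𝓝 0) := by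
    simpa using ((tendsto_rpow_mul_exp_neg_mul_rpow_atTop (3 * α) (by linarith)
      (by positivity)).comp tendsto_natCast_atTop_atTop).const_mul (4 * exp 1 * c ^ 3)
  refine tendsto_of_tendsto_of_tendsto_of_le_of_le' tendsto_const_nhds hlim ?_ ?_
  · filter_upwards [hq1] with n hn
    have : (1 : ℝ) ≤ q n := by exact_mod_cast hn
    exact mul_nonneg (by positivity)
      (pow_nonneg (sub_nonneg.mpr ((div_le_one (by linarith)).mpr this)) _)
  · filter_upwards [hq1, hq, eventually_gt_atTop 0] with n hn hqn hn0
    have hnpos : (0 : ℝ) < n := by exact_mod_cast hn0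
    have hcube : (c * (n : ℝ) ^ α) ^ 3 = c ^ 3 * (n : ℝ) ^ (3 * α) := by
      rw [mul_pow, ← rpow_natCast ((n : ℝ) ^ α), ← rpow_mul hnpos.le, mul_comm α]
      norm_num
    have hexpo : (n : ℝ) / (4 * (c ^ 3 * (n : ℝ) ^ (3 * α))) =
        1 / (4 * c ^ 3) * (n : ℝ) ^ (1 - 3 * α) := by
      rw [rpow_sub hnpos, rpow_one]
      field_simp
    calc _ ≤ 4 * exp 1 * (q n : ℝ) ^ 3 * exp (-(n / (4 * (q n : ℝ) ^ 3))) :=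
          missingLetterBound_le hn n
      _ ≤ 4 * exp 1 * (c * (n : ℝ) ^ α) ^ 3 * exp (-(n / (4 * (c * (n : ℝ) ^ α) ^ 3))) := by
        gcongr
      _ = _ := by rw [hcube, hexpo]; ring_nf

end Asymptotics

lemma tendsto_card_filter_div_of_hasCompleteBlocks {q : ℕ → ℕ} (hq1 : ∀ᶠ n in atTop, 1 ≤ q n)
    (hbad : Tendsto (fun n : ℕ => missingLetterBound (q n) n) atTop (𝓝 0))
    (P : ∀ n, (Fin n → Fin (q n)) → Prop) [∀ n, DecidablePred (P n)]
    (hP : ∀ n w, HasCompleteBlocks w → P n w) :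
    Tendsto (fun n => (#(univ.filter (P n)) : ℝ) / (q n : ℝ) ^ n) atTop (𝓝 1) := by
  refine tendsto_of_tendsto_of_tendsto_of_le_of_le'
    (by simpa only [sub_zero] using hbad.const_sub 1) tendsto_const_nhds ?_ ?_
  · filter_upwards [hq1] with n hn
    exact one_sub_missingLetterBound_le_card_filter_div hn (P n) (hP n)
  · filter_upwards [hq1] with n hn
    rw [div_le_one (pow_pos (by exact_mod_cast hn) n)]
    exact_mod_cast (card_le_univ _).trans_eq (by simp)

/-- If `q = Θ(n^α)` with `0 < α < 1/3`, then for a uniformly random word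
`w ∈ W_{n,q}`, `W(w) = w₀` asymptotically almost surely; consequently, under
the Plancherel–Hecke measure (the pushforward of the uniform measure under
`Heckeshape`), the random shape equals the full staircase a.a.s. -/
theorem hecke_word_longest_aas (α : ℝ) (hα0 : 0 < α) (hα : α < 1 / 3)
    (q : ℕ → ℕ) (c₁ c₂ : ℝ) (hc₁ : 0 < c₁)
    (hq : ∀ᶠ n : ℕ in atTop, c₁ * (n : ℝ) ^ α ≤ (q n : ℝ) ∧ (q n : ℝ) ≤ c₂ * (n : ℝ) ^ α) :
    Tendsto (fun n : ℕ =>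
        ((Finset.univ.filter (fun w : Fin n → Fin (q n) =>
          heckeW (q n) (toWord w) = Fin.revPerm)).card : ℝ) / (q n : ℝ) ^ n)
      atTop (nhds 1)
    ∧ Tendsto (fun n : ℕ =>
        ((Finset.univ.filter (fun w : Fin n → Fin (q n) =>
          heckeShape (toWord w) = staircase (q n))).card : ℝ) / (q n : ℝ) ^ n)
      atTop (nhds 1) := by
  have hq1 : ∀ᶠ n in atTop, 1 ≤ q n := by
    filter_upwards [(((tendsto_rpow_atTop hα0).const_mul_atTop hc₁).comp
      tendsto_natCast_atTop_atTop).eventually_ge_atTop 1, hq] with n h1 h2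
    exact_mod_cast h1.trans h2.1
  have hc₂ : 0 < c₂ := by
    obtain ⟨n, h1, h2⟩ := (hq1.and hq).exists
    have : (1 : ℝ) ≤ c₂ * (n : ℝ) ^ α := (Nat.one_le_cast.mpr h1).trans h2.2
    exact pos_of_mul_pos_left (by linarith) (Real.rpow_nonneg n.cast_nonneg α)
  have hbad := tendsto_missingLetterBound hα hc₂ hq1 (hq.mono fun n h => h.2)
  exact ⟨tendsto_card_filter_div_of_hasCompleteBlocks hq1 hbad _
      fun n w hw => hw.heckeW_and_heckeShape.1,
    tendsto_card_filter_div_of_hasCompleteBlocks hq1 hbad _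
      fun n w hw => hw.heckeW_and_heckeShape.2⟩
end

section
/- Let Switch(i̲, j) be the operator on mixed tableaux of shape α (fillings with entries from two alphabets {1̲,...,p̲} and {1,...,q}, each letter of each alphabet appearing at most once per row and column, together with a null element ∅) which, on each non-singleton connected component of the set of boxes containing i̲ or j, interchanges the i̲'s and the j's, returning ∅ if the result is not a mixed tableau, and fixes ∅. Then for i ≠ j and r ≠ s, the operators Switch(i̲, r) and Switch(j̲, s) commute: Switch(i̲,r) ∘ Switch(j̲,s) = Switch(j̲,s) ∘ Switch(i̲,r). -/
open scoped Classical

/-- A cell of the Young diagram with row lengths `sh`. -/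
def Cell (sh : List ℕ) := {c : ℕ × ℕ // c.2 < sh.getD c.1 0}

/-- Edge-adjacency of cells. -/
def Adj {sh : List ℕ} (c d : Cell sh) : Prop :=
  (c.1.1 = d.1.1 ∧ (c.1.2 = d.1.2 + 1 ∨ d.1.2 = c.1.2 + 1)) ∨
  (c.1.2 = d.1.2 ∧ (c.1.1 = d.1.1 + 1 ∨ d.1.1 = c.1.1 + 1))

/-- An entry `(true, i)` is the underlined letter `i̲` of the first alphabet
`{1̲,…,p̲}`; an entry `(false, j)` is the plain letter `j` of `{1,…,q}`. -/
def IsMixedTab (sh : List ℕ) (p q : ℕ) (T : Cell sh → Bool × ℕ) : Prop :=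
  (∀ c : Cell sh, ((T c).1 = true → 1 ≤ (T c).2 ∧ (T c).2 ≤ p) ∧
    ((T c).1 = false → 1 ≤ (T c).2 ∧ (T c).2 ≤ q)) ∧
  (∀ c d : Cell sh, c ≠ d → (c.1.1 = d.1.1 ∨ c.1.2 = d.1.2) → T c ≠ T d)

/-- The cell `c` carries the letter `i̲` or `j`. -/
def InS {sh : List ℕ} (i j : ℕ) (T : Cell sh → Bool × ℕ) (c : Cell sh) : Prop :=
  T c = (true, i) ∨ T c = (false, j)

/-- On each non-singleton connected component of the set of boxes containing
`i̲` or `j`, interchange the `i̲`'s and the `j`'s. -/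
noncomputable def switchFun {sh : List ℕ} (i j : ℕ) (T : Cell sh → Bool × ℕ) :
    Cell sh → Bool × ℕ := fun c =>
  if InS i j T c ∧ (∃ d : Cell sh, d ≠ c ∧ InS i j T d ∧
      Relation.ReflTransGen
        (fun a b => Adj a b ∧ InS i j T a ∧ InS i j T b) c d) then
    (if T c = (true, i) then (false, j) else (true, i))
  else T c

/-- The operator `Switch(i̲, j)` on mixed tableaux together with the null
tableau `∅` (modelled by `none`): apply `switchFun`, returning `∅` if the
result is not a mixed tableau, and fixing `∅`. -/
noncomputable def Switch (sh : List ℕ) (p q i j : ℕ) :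
    Option (Cell sh → Bool × ℕ) → Option (Cell sh → Bool × ℕ)
  | none => none
  | some T =>
    if IsMixedTab sh p q (switchFun i j T) then some (switchFun i j T) else none


/-- The condition under which `switchFun` changes a cell. -/
def SCond {sh : List ℕ} (i j : ℕ) (T : Cell sh → Bool × ℕ) (c : Cell sh) : Prop :=
  InS i j T c ∧ (∃ d : Cell sh, d ≠ c ∧ InS i j T d ∧
      Relation.ReflTransGen
        (fun a b => Adj a b ∧ InS i j T a ∧ InS i j T b) c d)

lemma switchFun_apply {sh : List ℕ} (i j : ℕ) (T : Cell sh → Bool × ℕ) (c : Cell sh) :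
    switchFun i j T c =
      if SCond i j T c then (if T c = (true, i) then (false, j) else (true, i)) else T c := by
  unfold switchFun SCond
  split <;> rfl

lemma switchFun_values {sh : List ℕ} (i j : ℕ) (T : Cell sh → Bool × ℕ) (c : Cell sh) :
    switchFun i j T c = T c ∨ switchFun i j T c = (true, i) ∨
      switchFun i j T c = (false, j) := by
  rw [switchFun_apply]
  split
  · split
    · exact Or.inr (Or.inr rfl)
    · exact Or.inr (Or.inl rfl)
  · exact Or.inl rfl

lemma inS_switch {sh : List ℕ} {i j r s : ℕ} (hij : i ≠ j) (hrs : r ≠ s)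
    (T : Cell sh → Bool × ℕ) (c : Cell sh) :
    InS i r (switchFun j s T) c ↔ InS i r T c := by
  simp only [InS]
  rw [switchFun_apply]
  split
  · rename_i h
    rcases h.1 with hc | hc <;> constructor
    · intro h'; exfalso
      rcases h' with h' | h' <;> split at h' <;> simp_all [Prod.ext_iff]
    · intro h'; exfalso
      rcases h' with h' | h' <;> rw [hc] at h' <;> simp_all [Prod.ext_iff]
    · intro h'; exfalso
      rcases h' with h' | h' <;> split at h' <;> simp_all [Prod.ext_iff]
    · intro h'; exfalso
      rcases h' with h' | h' <;> rw [hc] at h' <;> simp_all [Prod.ext_iff]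
  · exact Iff.rfl

lemma scond_switch {sh : List ℕ} {i j r s : ℕ} (hij : i ≠ j) (hrs : r ≠ s)
    (T : Cell sh → Bool × ℕ) (c : Cell sh) :
    SCond i r (switchFun j s T) c ↔ SCond i r T c := by
  have hrel : (fun a b : Cell sh => Adj a b ∧ InS i r (switchFun j s T) a ∧
      InS i r (switchFun j s T) b) =
      (fun a b : Cell sh => Adj a b ∧ InS i r T a ∧ InS i r T b) := by
    funext a b
    exact propext (by simp [inS_switch hij hrs])
  simp only [SCond, hrel, inS_switch hij hrs]

lemma inS_disjoint {sh : List ℕ} {i j r s : ℕ} (hij : i ≠ j) (hrs : r ≠ s)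
    (T : Cell sh → Bool × ℕ) (c : Cell sh) (h1 : InS i r T c) (h2 : InS j s T c) : False := by
  rcases h1 with h1 | h1 <;> rcases h2 with h2 | h2 <;> rw [h1] at h2 <;>
    simp_all [Prod.ext_iff]

lemma switchFun_comm {sh : List ℕ} {i j r s : ℕ} (hij : i ≠ j) (hrs : r ≠ s)
    (T : Cell sh → Bool × ℕ) :
    switchFun i r (switchFun j s T) = switchFun j s (switchFun i r T) := by
  funext c
  by_cases hCi : SCond i r T c <;> by_cases hCj : SCond j s T c
  · exact absurd hCj (fun h => inS_disjoint hij hrs T c hCi.1 h.1)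
  · have e2 : switchFun j s T c = T c := by rw [switchFun_apply, if_neg hCj]
    have e1 : switchFun i r T c = if T c = (true, i) then (false, r) else (true, i) := by
      rw [switchFun_apply, if_pos hCi]
    rw [switchFun_apply i r, if_pos ((scond_switch hij hrs T c).mpr hCi), e2]
    rw [switchFun_apply j s (switchFun i r T),
      if_neg (fun h => hCj ((scond_switch hij.symm hrs.symm (T := T) c).mp h)), e1]
  · have e2 : switchFun i r T c = T c := by rw [switchFun_apply, if_neg hCi]
    have e1 : switchFun j s T c = if T c = (true, j) then (false, s) else (true, j) := by
      rw [switchFun_apply, if_pos hCj]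
    rw [switchFun_apply i r (switchFun j s T),
      if_neg (fun h => hCi ((scond_switch hij hrs (T := T) c).mp h)), e1]
    rw [switchFun_apply j s, if_pos ((scond_switch hij.symm hrs.symm T c).mpr hCj), e2]
  · rw [switchFun_apply i r (switchFun j s T),
      if_neg (fun h => hCi ((scond_switch hij hrs (T := T) c).mp h)),
      switchFun_apply j s T, if_neg hCj,
      switchFun_apply j s (switchFun i r T),
      if_neg (fun h => hCj ((scond_switch hij.symm hrs.symm (T := T) c).mp h)),
      switchFun_apply i r T, if_neg hCi]

lemma notMixed_switch {sh : List ℕ} {p q i j r s : ℕ}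
    {T : Cell sh → Bool × ℕ} (hT : IsMixedTab sh p q T)
    (hi : 1 ≤ i ∧ i ≤ p) (hr : 1 ≤ r ∧ r ≤ q) (hij : i ≠ j) (hrs : r ≠ s)
    (h : ¬ IsMixedTab sh p q (switchFun i r T)) :
    ¬ IsMixedTab sh p q (switchFun j s (switchFun i r T)) := by
  set U := switchFun i r T with hU
  have hb : ∀ c : Cell sh, ((U c).1 = true → 1 ≤ (U c).2 ∧ (U c).2 ≤ p) ∧
      ((U c).1 = false → 1 ≤ (U c).2 ∧ (U c).2 ≤ q) := by
    intro c
    rcases switchFun_values i r T c with hv | hv | hv <;> rw [hU, hv]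
    · exact hT.1 c
    · exact ⟨fun _ => hi, fun h => by simp at h⟩
    · exact ⟨fun h => by simp at h, fun _ => hr⟩
  have hpair : ∃ c d : Cell sh, c ≠ d ∧ (c.1.1 = d.1.1 ∨ c.1.2 = d.1.2) ∧ U c = U d := by
    by_contra hcon
    push_neg at hcon
    exact h ⟨hb, fun c d h1 h2 => hcon c d h1 h2⟩
  obtain ⟨c, d, hcd, hline, heq⟩ := hpair
  have hval : U c = (true, i) ∨ U c = (false, r) := by
    rcases switchFun_values i r T c with h1 | h1 | h1
    · rcases switchFun_values i r T d with h2 | h2 | h2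
      · exact absurd (h1 ▸ h2 ▸ heq) (hT.2 c d hcd hline)
      · exact Or.inl (heq.trans h2)
      · exact Or.inr (heq.trans h2)
    · exact Or.inl h1
    · exact Or.inr h1
  have hnot : ∀ e : Cell sh, U e = (true, i) ∨ U e = (false, r) →
      switchFun j s U e = U e := by
    intro e he
    rw [switchFun_apply, if_neg]
    intro hc
    rcases he with hv | hv <;> rcases hc.1 with h' | h' <;> rw [hv] at h' <;>
      simp_all [Prod.ext_iff]
  intro hW
  exact hW.2 c d hcd hline (by rw [hnot c hval, hnot d (heq ▸ hval), heq])

lemma Switch_some {sh : List ℕ} (p q i j : ℕ) (T : Cell sh → Bool × ℕ) :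
    Switch sh p q i j (some T) =
      if IsMixedTab sh p q (switchFun i j T) then some (switchFun i j T) else none := rfl

lemma Switch_none {sh : List ℕ} (p q i j : ℕ) :
    Switch sh p q i j none = none := rfl

/-- For `i ≠ j` and `r ≠ s`, the operators `Switch(i̲, r)` and `Switch(j̲, s)`
commute. -/
theorem switch_comm (sh : List ℕ) (p q i j r s : ℕ)
    (hi : 1 ≤ i ∧ i ≤ p) (hj : 1 ≤ j ∧ j ≤ p) (hr : 1 ≤ r ∧ r ≤ q) (hs : 1 ≤ s ∧ s ≤ q)
    (hij : i ≠ j) (hrs : r ≠ s) (O : Option (Cell sh → Bool × ℕ))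
    (hO : ∀ T, O = some T → IsMixedTab sh p q T) :
    Switch sh p q i r (Switch sh p q j s O) = Switch sh p q j s (Switch sh p q i r O) := by
  cases O with
  | none => rfl
  | some T =>
    have hT := hO T rfl
    have hcomm : switchFun i r (switchFun j s T) = switchFun j s (switchFun i r T) :=
      switchFun_comm hij hrs T
    by_cases h1 : IsMixedTab sh p q (switchFun i r T) <;>
      by_cases h2 : IsMixedTab sh p q (switchFun j s T)
    · rw [Switch_some p q j s T, if_pos h2, Switch_some p q i r T, if_pos h1,
        Switch_some, Switch_some, hcomm]
    · rw [Switch_some p q j s T, if_neg h2, Switch_some p q i r T, if_pos h1,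
        Switch_none, Switch_some, if_neg (hcomm ▸ notMixed_switch hT hj hs hij.symm hrs.symm h2)]
    · rw [Switch_some p q j s T, if_pos h2, Switch_some p q i r T, if_neg h1,
        Switch_none, Switch_some, if_neg (hcomm ▸ notMixed_switch hT hi hr hij hrs h1)]
    · rw [Switch_some p q j s T, if_neg h2, Switch_some p q i r T, if_neg h1,
        Switch_none, Switch_none]
end
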